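/- arXiv:1611.07830 — 2 statements merged into one kernel-verified Lean document; each statement's English description precedes it below -/
import Mathlib

section
/- Let ρ be a nonzero c-compatible representation of ℂl(V) on a finite-dimensional complex vector space K with Krein product (·,·). Let σ = Ad_b ∘ c be an admissible real structure with b in the complex Clifford group. For x ∈ ℂl(V), define the sesquilinear form (ψ,φ)_x := (ψ, ρ(x)φ) on K. Then (·,·)_x is a σ-compatible Krein product on K if and only if x^× = x and x is a nonzero scalar multiple of b⁻¹. -/
noncomputable section

open TensorProduct

variable {V : Type*} [AddCommGroup V] [Module ℝ V]

/-- `ℂl(V)`: the complexified Clifford algebra of `(V, Q)` (convention `v² = Q(v)·1`). -/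
abbrev CCl (Q : QuadraticForm ℝ V) := CliffordAlgebra (Q.baseChange ℂ)

/-- The canonical embedding of the real vector space `V` into `ℂl(V)`. -/
def ιr (Q : QuadraticForm ℝ V) (v : V) : CCl Q :=
  CliffordAlgebra.ι (Q.baseChange ℂ) ((1 : ℂ) ⊗ₜ[ℝ] v)

/-- `V^ℂ`: the complexification of `V`, sitting inside `ℂl(V)`. -/
def VC (Q : QuadraticForm ℝ V) : Submodule ℂ (CCl Q) :=
  LinearMap.range (CliffordAlgebra.ι (Q.baseChange ℂ))

/-- A real structure on `ℂl(V)`: an involutive conjugate-linear algebra automorphism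
stabilizing `V^ℂ`. -/
structure RealStructure (Q : QuadraticForm ℝ V) where
  toFun : CCl Q → CCl Q
  map_add' : ∀ x y, toFun (x + y) = toFun x + toFun y
  map_mul' : ∀ x y, toFun (x * y) = toFun x * toFun y
  map_smul' : ∀ (z : ℂ) (x : CCl Q), toFun (z • x) = (starRingEnd ℂ z) • toFun x
  map_one' : toFun 1 = 1
  invol : ∀ x, toFun (toFun x) = x
  stable : ∀ x ∈ VC Q, toFun x ∈ VC Q

namespace RealStructure

theorem map_zero' {Q : QuadraticForm ℝ V} (σ : RealStructure Q) : σ.toFun 0 = 0 := by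
  have h := σ.map_smul' 0 0
  simpa using h

end RealStructure

/-- The fixed points of a real structure, as a real submodule of `ℂl(V)`. -/
def fixedPoints {Q : QuadraticForm ℝ V} (σ : RealStructure Q) : Submodule ℝ (CCl Q) where
  carrier := {x | σ.toFun x = x}
  add_mem' := by
    intro a b ha hb
    simp only [Set.mem_setOf_eq] at *
    rw [σ.map_add', ha, hb]
  zero_mem' := σ.map_zero'
  smul_mem' := by
    intro r x hx
    simp only [Set.mem_setOf_eq] at *
    rw [← Complex.coe_smul, σ.map_smul', hx]
    simp [Complex.conj_ofReal]

/-- `V_σ = {w ∈ V^ℂ : σ(w) = w}`, as a real submodule of `ℂl(V)`. -/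
def VFix {Q : QuadraticForm ℝ V} (σ : RealStructure Q) : Submodule ℝ (CCl Q) :=
  (VC Q).restrictScalars ℝ ⊓ fixedPoints σ

/-- Multiplication by `i`, as a real-linear endomorphism of `ℂl(V)`. -/
def mulI (Q : QuadraticForm ℝ V) : CCl Q →ₗ[ℝ] CCl Q where
  toFun x := Complex.I • x
  map_add' x y := smul_add _ x y
  map_smul' r x := smul_comm Complex.I r x

/-- The real subspace `V ⊆ V^ℂ ⊆ ℂl(V)`. -/
def Vreal (Q : QuadraticForm ℝ V) : Submodule ℝ (CCl Q) :=
  Submodule.span ℝ (Set.range (ιr Q))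

/-- The canonical real structure `c` (characterized by fixing `V` pointwise). -/
def IsCanonicalC {Q : QuadraticForm ℝ V} (c : RealStructure Q) : Prop :=
  ∀ v : V, c.toFun (ιr Q v) = ιr Q v

/-- `σ` is admissible iff it commutes with the canonical real structure `c`. -/
def Admissible {Q : QuadraticForm ℝ V} (c σ : RealStructure Q) : Prop :=
  ∀ x, σ.toFun (c.toFun x) = c.toFun (σ.toFun x)

/-- Nondegeneracy of a real quadratic form, via its polar form. -/
def QFNondeg (Q : QuadraticForm ℝ V) : Prop :=
  ∀ v : V, (∀ w : V, QuadraticMap.polar Q v w = 0) → v = 0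

/-- A hermitian sesquilinear form (conjugate-linear in the first argument). -/
structure SesqForm (K : Type*) [AddCommGroup K] [Module ℂ K] where
  form : K → K → ℂ
  add_left : ∀ x y z : K, form (x + y) z = form x z + form y z
  add_right : ∀ x y z : K, form x (y + z) = form x y + form x z
  smul_left : ∀ (a : ℂ) (x y : K), form (a • x) y = starRingEnd ℂ a * form x y
  smul_right : ∀ (a : ℂ) (x y : K), form x (a • y) = a * form x y
  herm : ∀ x y : K, form y x = starRingEnd ℂ (form x y)

section KreinDefs

variable {K : Type*} [AddCommGroup K] [Module ℂ K]

/-- Nondegeneracy: a nondegenerate hermitian form is a Krein product. -/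
def SesqForm.Nondeg (h : SesqForm K) : Prop :=
  ∀ x : K, (∀ y : K, h.form x y = 0) → x = 0

/-- Positive definiteness of a sesquilinear form. -/
def FPosDef (f : K → K → ℂ) : Prop := ∀ x : K, x ≠ 0 → ∃ r : ℝ, 0 < r ∧ f x x = r

/-- Negative definiteness of a sesquilinear form. -/
def FNegDef (f : K → K → ℂ) : Prop := ∀ x : K, x ≠ 0 → ∃ r : ℝ, r < 0 ∧ f x x = r

/-- Definiteness of a sesquilinear form. -/
def FDefinite (f : K → K → ℂ) : Prop := FPosDef f ∨ FNegDef f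

/-- `f` is neutral: it admits an orthogonal decomposition into a positive definite
and a negative definite part of equal dimensions (equal indices of inertia). -/
def FNeutral (f : K → K → ℂ) : Prop :=
  ∃ P N : Submodule ℂ K, P ⊓ N = ⊥ ∧ P ⊔ N = ⊤
    ∧ (∀ x ∈ P, ∀ y ∈ N, f x y = 0)
    ∧ (∀ x ∈ P, x ≠ 0 → ∃ r : ℝ, 0 < r ∧ f x x = r)
    ∧ (∀ y ∈ N, y ≠ 0 → ∃ r : ℝ, r < 0 ∧ f y y = r)
    ∧ Module.finrank ℂ P = Module.finrank ℂ N

end KreinDefs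

section Rep

variable {V : Type*} [AddCommGroup V] [Module ℝ V]
variable {Q : QuadraticForm ℝ V} {K : Type*} [AddCommGroup K] [Module ℂ K]

/-- σ-compatibility of a representation with a hermitian form:
`(ρ(a)ψ, φ) = (ψ, ρ(a^{×_σ})φ)` where `a^{×_σ} = σ(aᵀ)`. -/
def Compat (σ : RealStructure Q) (ρ : CCl Q →ₐ[ℂ] Module.End ℂ K)
    (h : SesqForm K) : Prop :=
  ∀ (a : CCl Q) (ψ φ : K),
    h.form (ρ a ψ) φ = h.form ψ (ρ (σ.toFun (CliffordAlgebra.reverse a)) φ)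

/-- Irreducibility of a representation: `K` is a simple module. -/
def IsIrreducibleRep (ρ : CCl Q →ₐ[ℂ] Module.End ℂ K) : Prop :=
  (∃ x : K, x ≠ 0) ∧
    ∀ p : Submodule ℂ K, (∀ a : CCl Q, ∀ x ∈ p, ρ a x ∈ p) → p = ⊥ ∨ p = ⊤

end Rep

/-- Membership in the complex Clifford group `Γ_ℂ`. -/
def InCliffordGroup {V : Type*} [AddCommGroup V] [Module ℝ V] {Q : QuadraticForm ℝ V}
    (g : (CCl Q)ˣ) : Prop :=
  ∀ x ∈ VC Q, (g : CCl Q) * x * ((g⁻¹ : (CCl Q)ˣ) : CCl Q) ∈ VC Q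


/- ### Auxiliary development: the complexified Clifford algebra of a nondegenerate
even-dimensional form is central simple (via an orthogonal basis and conjugation
projectors). -/

set_option linter.unusedSectionVars false

namespace CT

variable {A : Type*} [Ring A] [Algebra ℂ A]
variable {n : ℕ} (e : Fin n → A) (q : Fin n → ℂ)

/-- ordered product of generators along a list of indices -/
def eProd (l : List (Fin n)) : A := (l.map e).prod

/-- canonical basis-type element indexed by a finset -/
def eS (S : Finset (Fin n)) : A := eProd e ((List.finRange n).filter (· ∈ S))

/-- formal inverse of a generator -/
def einv (i : Fin n) : A := (q i)⁻¹ • e i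

/-- conjugation sign -/
def sgn (i : Fin n) (S : Finset (Fin n)) : ℂ := (-1) ^ (S.erase i).card

@[simp] theorem eProd_nil : eProd e ([] : List (Fin n)) = 1 := rfl

@[simp] theorem eProd_cons (j : Fin n) (l : List (Fin n)) :
    eProd e (j :: l) = e j * eProd e l := by simp [eProd]

variable (hsq : ∀ i, e i * e i = algebraMap ℂ A (q i))
  (hanti : ∀ i j, i ≠ j → e i * e j = -(e j * e i))
  (hq : ∀ i, q i ≠ 0)

section rels
include hsq hq

theorem e_mul_einv (i : Fin n) : e i * einv e q i = 1 := by
  rw [einv, mul_smul_comm, hsq, Algebra.smul_def, ← map_mul,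
    inv_mul_cancel₀ (hq i), map_one]

theorem einv_mul_e (i : Fin n) : einv e q i * e i = 1 := by
  rw [einv, smul_mul_assoc, hsq, Algebra.smul_def, ← map_mul,
    inv_mul_cancel₀ (hq i), map_one]

theorem isUnit_e (i : Fin n) : IsUnit (e i) :=
  ⟨⟨e i, einv e q i, e_mul_einv e q hsq hq i, einv_mul_e e q hsq hq i⟩, rfl⟩

theorem isUnit_eProd (l : List (Fin n)) : IsUnit (eProd e l) := by
  induction l with
  | nil => simp
  | cons j l ih => rw [eProd_cons]; exact (isUnit_e e q hsq hq j).mul ih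

theorem isUnit_eS (S : Finset (Fin n)) : IsUnit (eS e S) :=
  isUnit_eProd e q hsq hq _

end rels

section comm
include hsq hanti

theorem e_mul_eProd (i : Fin n) (l : List (Fin n)) :
    e i * eProd e l = ((-1 : ℂ) ^ ((l.filter (· ≠ i)).length)) • (eProd e l * e i) := by
  induction l with
  | nil => simp
  | cons j l ih =>
    by_cases hj : j = i
    · subst hj
      have hfil : ((j :: l).filter (· ≠ j)) = l.filter (· ≠ j) := by
        simp [List.filter_cons]
      rw [hfil, eProd_cons, ← mul_assoc, hsq, ← Algebra.smul_def]
      -- RHS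
      have hs : ((-1 : ℂ) ^ ((l.filter (· ≠ j)).length)) *
          ((-1 : ℂ) ^ ((l.filter (· ≠ j)).length)) = 1 := by
        rw [← pow_add]
        exact Even.neg_one_pow ⟨_, rfl⟩
      have h2 : eProd e l * e j = ((-1 : ℂ) ^ ((l.filter (· ≠ j)).length)) • (e j * eProd e l) := by
        calc eProd e l * e j
            = ((-1 : ℂ) ^ ((l.filter (· ≠ j)).length)) •
                (((-1 : ℂ) ^ ((l.filter (· ≠ j)).length)) • (eProd e l * e j)) := by
              rw [smul_smul, hs, one_smul]
          _ = ((-1 : ℂ) ^ ((l.filter (· ≠ j)).length)) • (e j * eProd e l) := by rw [← ih]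
      rw [mul_assoc, h2, mul_smul_comm, ← mul_assoc (e j), hsq, ← Algebra.smul_def,
        smul_smul, smul_smul, mul_comm, hs, mul_one]
    · have hfil : ((j :: l).filter (· ≠ i)) = j :: l.filter (· ≠ i) := by
        simp [List.filter_cons, hj]
      rw [hfil, eProd_cons, ← mul_assoc, hanti i j (fun h => hj h.symm), List.length_cons,
        neg_mul, mul_assoc, ih, pow_succ, mul_smul_comm, mul_assoc, mul_neg_one, neg_smul]

end comm


theorem length_filter_finRange (p : Fin n → Prop) [DecidablePred p] :
    ((List.finRange n).filter (fun j => p j)).length = (Finset.univ.filter p).card := by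
  rw [← List.toFinset_card_of_nodup ((List.nodup_finRange n).filter _),
    List.toFinset_filter, List.toFinset_finRange]
  simp

theorem sgn_mul_self (i : Fin n) (S : Finset (Fin n)) : sgn i S * sgn i S = 1 := by
  rw [sgn, ← pow_add]; exact Even.neg_one_pow ⟨_, rfl⟩

section conj
include hsq hanti hq

theorem e_conj_eS (i : Fin n) (S : Finset (Fin n)) :
    e i * eS e S * einv e q i = sgn i S • eS e S := by
  have hlen : (((List.finRange n).filter (· ∈ S)).filter (· ≠ i)).length
      = (S.erase i).card := by
    rw [List.filter_filter]
    have : ∀ j : Fin n, (decide (j ≠ i) && decide (j ∈ S)) = decide (j ∈ S.erase i) := by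
      intro j; simp [Finset.mem_erase]
    rw [List.filter_congr (fun j _ => this j)]
    rw [show (fun j => decide (j ∈ S.erase i)) = (fun j => decide ((fun x => x ∈ S.erase i) j)) from rfl]
    rw [length_filter_finRange (fun j => j ∈ S.erase i)]
    congr 1
    ext j; simp
  rw [eS, e_mul_eProd e q hsq hanti i, hlen, smul_mul_assoc, mul_assoc,
    e_mul_einv e q hsq hq i, mul_one, sgn]

end conj

/-- the elementary averaging operator -/
def Phi (i : Fin n) (ε : ℂ) : Module.End ℂ A where
  toFun x := (2⁻¹ : ℂ) • (x + ε • (e i * x * einv e q i))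
  map_add' x y := by
    simp only [mul_add, add_mul, smul_add]; abel
  map_smul' c x := by
    simp only [RingHom.id_apply, mul_smul_comm, smul_mul_assoc, smul_add, smul_smul]
    ring_nf

/-- the full projector onto the `S`-component -/
def PhiS (S : Finset (Fin n)) : Module.End ℂ A :=
  ((List.finRange n).map (fun i => Phi e q i (sgn i S))).prod

theorem Phi_apply (i : Fin n) (ε : ℂ) (x : A) :
    Phi e q i ε x = (2⁻¹ : ℂ) • (x + ε • (e i * x * einv e q i)) := rfl

section eval
include hsq hanti hq

theorem Phi_eS (i : Fin n) (ε : ℂ) (T : Finset (Fin n)) :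
    Phi e q i ε (eS e T) = ((2⁻¹ : ℂ) * (1 + ε * sgn i T)) • eS e T := by
  have h1 : (eS e T) + (ε * sgn i T) • eS e T = (1 + ε * sgn i T) • eS e T := by
    rw [add_smul, one_smul]
  rw [Phi_apply, e_conj_eS e q hsq hanti hq i T, smul_smul, h1, smul_smul]

theorem prodPhi_eS (l : List (Fin n)) (S T : Finset (Fin n)) :
    ((l.map (fun i => Phi e q i (sgn i S))).prod) (eS e T)
      = ((l.map (fun i => (2⁻¹ : ℂ) * (1 + sgn i S * sgn i T))).prod) • eS e T := by
  induction l with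
  | nil => simp
  | cons j l ih =>
    rw [List.map_cons, List.prod_cons, Module.End.mul_apply, ih, map_smul,
      Phi_eS e q hsq hanti hq j _ T, smul_smul, List.map_cons, List.prod_cons,
      mul_comm]

theorem PhiS_eS (hn : Even n)
    (hpar : ∀ S T : Finset (Fin n), S ≠ T → ∃ i, (S.erase i).card % 2 ≠ (T.erase i).card % 2)
    (S T : Finset (Fin n)) :
    PhiS e q S (eS e T) = if S = T then eS e T else 0 := by
  rw [PhiS, prodPhi_eS e q hsq hanti hq]
  by_cases hST : S = T
  · subst hST
    rw [if_pos rfl]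
    have : ∀ x ∈ (List.finRange n).map (fun i => (2⁻¹ : ℂ) * (1 + sgn i S * sgn i S)),
        x = 1 := by
      intro x hx
      obtain ⟨i, _, rfl⟩ := List.mem_map.1 hx
      rw [sgn_mul_self]
      norm_num
    rw [List.prod_eq_one this, one_smul]
  · rw [if_neg hST]
    obtain ⟨i, hi⟩ := hpar S T hST
    have hzero : (2⁻¹ : ℂ) * (1 + sgn i S * sgn i T) = 0 := by
      have hodd : Odd ((S.erase i).card + (T.erase i).card) := by
        rw [Nat.odd_iff]; omega
      rw [sgn, sgn, ← pow_add, hodd.neg_one_pow]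
      norm_num
    have hmem : (0 : ℂ) ∈ (List.finRange n).map
        (fun i => (2⁻¹ : ℂ) * (1 + sgn i S * sgn i T)) := by
      rw [List.mem_map]
      exact ⟨i, List.mem_finRange i, hzero⟩
    rw [List.prod_eq_zero hmem, zero_smul]

end eval

@[simp] theorem eS_empty : eS e (∅ : Finset (Fin n)) = 1 := by
  have h : (List.finRange n).filter (· ∈ (∅ : Finset (Fin n))) = [] := by
    simp
  rw [eS, h, eProd_nil]

theorem parity_lemma (hn : Even n) {S T : Finset (Fin n)} (hST : S ≠ T) :
    ∃ i, (S.erase i).card % 2 ≠ (T.erase i).card % 2 := by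
  by_contra hcon
  push_neg at hcon
  have key : ∀ (U : Finset (Fin n)) (i : Fin n),
      (U.erase i).card = U.card - (if i ∈ U then 1 else 0) := by
    intro U i
    by_cases h : i ∈ U
    · simp [Finset.card_erase_of_mem h, h]
    · simp [Finset.erase_eq_of_notMem h, h]
  by_cases hc : S.card % 2 = T.card % 2
  · apply hST
    ext i
    by_cases hiS : i ∈ S
    · by_cases hiT : i ∈ T
      · exact iff_of_true hiS hiT
      · exfalso
        have h1 := hcon i
        rw [key S i, key T i, if_pos hiS, if_neg hiT] at h1
        have h2 : 0 < S.card := Finset.card_pos.2 ⟨i, hiS⟩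
        omega
    · by_cases hiT : i ∈ T
      · exfalso
        have h1 := hcon i
        rw [key S i, key T i, if_neg hiS, if_pos hiT] at h1
        have h2 : 0 < T.card := Finset.card_pos.2 ⟨i, hiT⟩
        omega
      · exact iff_of_false hiS hiT
  · exfalso
    have hTc : T = Sᶜ := by
      ext i
      rw [Finset.mem_compl]
      by_cases hiS : i ∈ S
      · by_cases hiT : i ∈ T
        · exfalso
          have h1 := hcon i
          rw [key S i, key T i, if_pos hiS, if_pos hiT] at h1
          have h2 : 0 < S.card := Finset.card_pos.2 ⟨i, hiS⟩
          have h3 : 0 < T.card := Finset.card_pos.2 ⟨i, hiT⟩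
          omega
        · exact iff_of_false hiT (not_not_intro hiS)
      · by_cases hiT : i ∈ T
        · exact iff_of_true hiT hiS
        · exfalso
          have h1 := hcon i
          rw [key S i, key T i, if_neg hiS, if_neg hiT] at h1
          omega
    have hcard : T.card = n - S.card := by
      rw [hTc, Finset.card_compl, Fintype.card_fin]
    have hle : S.card ≤ n := by
      have := Finset.card_le_univ S
      rwa [Fintype.card_fin] at this
    obtain ⟨k, hk⟩ := hn
    omega

section master
include hsq hanti hq

theorem PhiS_decomp (hn : Even n) (a : A) (c : Finset (Fin n) → ℂ)
    (hc : ∑ T : Finset (Fin n), c T • eS e T = a) (S : Finset (Fin n)) :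
    PhiS e q S a = c S • eS e S := by
  conv_lhs => rw [← hc]
  rw [map_sum]
  have hterm : ∀ T ∈ Finset.univ, PhiS e q S (c T • eS e T)
      = if S = T then c T • eS e T else 0 := by
    intro T _
    rw [map_smul, PhiS_eS e q hsq hanti hq hn (fun S T h => parity_lemma hn h) S T]
    split <;> simp
  rw [Finset.sum_congr rfl hterm, Finset.sum_ite_eq]
  simp

theorem central_scalar (hn : Even n)
    (hspan : ∀ x : A, x ∈ Submodule.span ℂ (Set.range (eS e)))
    (z : A) (hz : ∀ y, y * z = z * y) : ∃ μ : ℂ, z = μ • (1 : A) := by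
  obtain ⟨c, hc⟩ := (Submodule.mem_span_range_iff_exists_fun ℂ).1 (hspan z)
  have hfix : ∀ l : List (Fin n),
      ((l.map (fun i => Phi e q i (sgn i (∅ : Finset (Fin n))))).prod) z = z := by
    intro l
    induction l with
    | nil => simp
    | cons j l ih =>
      rw [List.map_cons, List.prod_cons, Module.End.mul_apply, ih, Phi_apply]
      have h1 : e j * z * einv e q j = z := by
        rw [hz (e j), mul_assoc, e_mul_einv e q hsq hq j, mul_one]
      have h2 : sgn j (∅ : Finset (Fin n)) = 1 := by simp [sgn]
      rw [h1, h2, one_smul, ← two_smul ℂ z, smul_smul]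
      norm_num
  have h2 : PhiS e q ∅ z = z := hfix _
  rw [PhiS_decomp e q hsq hanti hq hn z c hc ∅, eS_empty] at h2
  exact ⟨c ∅, h2.symm⟩

theorem faithful {B : Type*} [Ring B] [Algebra ℂ B] (hn : Even n)
    (hspan : ∀ x : A, x ∈ Submodule.span ℂ (Set.range (eS e)))
    (ρ : A →ₐ[ℂ] B) (hone : (1 : B) ≠ 0) : Function.Injective ρ := by
  haveI : Nontrivial B := ⟨1, 0, hone⟩
  rw [injective_iff_map_eq_zero]
  intro a ha
  obtain ⟨c, hc⟩ := (Submodule.mem_span_range_iff_exists_fun ℂ).1 (hspan a)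
  have hcoef : ∀ S, c S = 0 := by
    intro S
    have hker : ∀ l : List (Fin n),
        ρ (((l.map (fun i => Phi e q i (sgn i S))).prod) a) = 0 := by
      intro l
      induction l with
      | nil => simpa using ha
      | cons j l ih =>
        rw [List.map_cons, List.prod_cons, Module.End.mul_apply, Phi_apply,
          map_smul, map_add, map_smul, map_mul, map_mul, ih]
        simp
    have h3 : PhiS e q S a = c S • eS e S := PhiS_decomp e q hsq hanti hq hn a c hc S
    have h4 : ρ (c S • eS e S) = 0 := by rw [← h3]; exact hker _
    rw [map_smul] at h4
    have h5 : ρ (eS e S) ≠ 0 := ((isUnit_eS e q hsq hq S).map ρ).ne_zero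
    by_contra hcS
    apply h5
    have h6 := congrArg (fun y => (c S)⁻¹ • y) h4
    simpa [smul_smul, inv_mul_cancel₀ hcS] using h6
  rw [← hc]
  simp [hcoef]

end master

section spanmul
include hsq hanti

theorem e_mul_filter (L : List (Fin n)) (hL : L.Pairwise (· < ·)) :
    ∀ i ∈ L, ∀ S : Finset (Fin n), ∃ c : ℂ,
      e i * eProd e (L.filter (· ∈ S))
        = c • eProd e (L.filter (· ∈ (if i ∈ S then S.erase i else insert i S))) := by
  induction L with
  | nil => intro i hi; cases hi
  | cons j L ih =>
    intro i hi S
    have hj : ∀ k ∈ L, j < k := fun k hk => (List.pairwise_cons.1 hL).1 k hk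
    have hL' := (List.pairwise_cons.1 hL).2
    rcases List.mem_cons.1 hi with rfl | hiL
    · -- i is the head
      by_cases hiS : i ∈ S
      · rw [if_pos hiS]
        refine ⟨q i, ?_⟩
        have hf1 : (i :: L).filter (· ∈ S) = i :: L.filter (· ∈ S) :=
          List.filter_cons_of_pos (by simpa using hiS)
        have hf2 : (i :: L).filter (· ∈ S.erase i) = L.filter (· ∈ S.erase i) :=
          List.filter_cons_of_neg (by simp)
        have hf3 : L.filter (· ∈ S.erase i) = L.filter (· ∈ S) :=
          List.filter_congr (fun k hk => by
            simp [Finset.mem_erase, (hj k hk).ne'])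
        rw [hf1, hf2, hf3, eProd_cons, ← mul_assoc, hsq, ← Algebra.smul_def]
      · rw [if_neg hiS]
        refine ⟨1, ?_⟩
        have hf1 : (i :: L).filter (· ∈ S) = L.filter (· ∈ S) :=
          List.filter_cons_of_neg (by simpa using hiS)
        have hf2 : (i :: L).filter (· ∈ insert i S) = i :: L.filter (· ∈ insert i S) :=
          List.filter_cons_of_pos (by simp)
        have hf3 : L.filter (· ∈ insert i S) = L.filter (· ∈ S) :=
          List.filter_congr (fun k hk => by
            simp [Finset.mem_insert, (hj k hk).ne'])
        rw [hf1, hf2, hf3, eProd_cons, one_smul]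
    · -- i is in the tail
      have hij : j ≠ i := (hj i hiL).ne
      obtain ⟨c, hcEq⟩ := ih hL' i hiL S
      have hjS' : j ∈ (if i ∈ S then S.erase i else insert i S) ↔ j ∈ S := by
        by_cases hiS : i ∈ S <;> simp [hiS, Finset.mem_erase, Finset.mem_insert, hij]
      by_cases hjS : j ∈ S
      · refine ⟨-c, ?_⟩
        have hf1 : (j :: L).filter (· ∈ S) = j :: L.filter (· ∈ S) :=
          List.filter_cons_of_pos (by simpa using hjS)
        have hf2 : (j :: L).filter (· ∈ (if i ∈ S then S.erase i else insert i S))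
            = j :: L.filter (· ∈ (if i ∈ S then S.erase i else insert i S)) :=
          List.filter_cons_of_pos (by simpa using hjS'.2 hjS)
        rw [hf1, hf2, eProd_cons, eProd_cons, ← mul_assoc, hanti i j (fun h => hij h.symm),
          neg_mul, mul_assoc, hcEq, mul_smul_comm, neg_smul]
      · refine ⟨c, ?_⟩
        have hf1 : (j :: L).filter (· ∈ S) = L.filter (· ∈ S) :=
          List.filter_cons_of_neg (by simpa using hjS)
        have hf2 : (j :: L).filter (· ∈ (if i ∈ S then S.erase i else insert i S))
            = L.filter (· ∈ (if i ∈ S then S.erase i else insert i S)) :=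
          List.filter_cons_of_neg (by simpa using (fun h => hjS (hjS'.1 h)))
        rw [hf1, hf2, hcEq]

theorem e_mul_eS_mem (i : Fin n) (S : Finset (Fin n)) :
    e i * eS e S ∈ Submodule.span ℂ (Set.range (eS e)) := by
  obtain ⟨c, hcEq⟩ := e_mul_filter e q hsq hanti (List.finRange n)
    (List.pairwise_lt_finRange n) i (List.mem_finRange i) S
  rw [eS, hcEq]
  exact Submodule.smul_mem _ _ (Submodule.subset_span ⟨_, rfl⟩)

theorem mul_mem_span (x y : A)
    (hx : x ∈ Submodule.span ℂ (Set.range (eS e)))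
    (hy : y ∈ Submodule.span ℂ (Set.range (eS e))) :
    x * y ∈ Submodule.span ℂ (Set.range (eS e)) := by
  have hstep : ∀ i : Fin n, ∀ z ∈ Submodule.span ℂ (Set.range (eS e)),
      e i * z ∈ Submodule.span ℂ (Set.range (eS e)) := by
    intro i z hz
    induction hz using Submodule.span_induction with
    | mem w hw =>
      obtain ⟨S, rfl⟩ := hw
      exact e_mul_eS_mem e q hsq hanti i S
    | zero => simpa using Submodule.zero_mem _
    | add a b _ _ iha ihb => rw [mul_add]; exact Submodule.add_mem _ iha ihb
    | smul r a _ iha => rw [mul_smul_comm]; exact Submodule.smul_mem _ _ iha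
  have hprod : ∀ l : List (Fin n), ∀ z ∈ Submodule.span ℂ (Set.range (eS e)),
      eProd e l * z ∈ Submodule.span ℂ (Set.range (eS e)) := by
    intro l
    induction l with
    | nil => intro z hz; simpa using hz
    | cons j l ih =>
      intro z hz
      rw [eProd_cons, mul_assoc]
      exact hstep j _ (ih z hz)
  induction hx using Submodule.span_induction with
  | mem w hw =>
    obtain ⟨S, rfl⟩ := hw
    exact hprod _ y hy
  | zero => simpa using Submodule.zero_mem _
  | add a b _ _ iha ihb => rw [add_mul]; exact Submodule.add_mem _ iha ihb
  | smul r a _ iha => rw [smul_mul_assoc]; exact Submodule.smul_mem _ _ iha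

end spanmul

end CT

section Inst
open Module

variable {V : Type*} [AddCommGroup V] [Module ℝ V] [FiniteDimensional ℝ V]

theorem exists_good_family (Q : QuadraticForm ℝ V) (hQ : ∀ v : V,
      (∀ w : V, QuadraticMap.polar Q v w = 0) → v = 0) :
    ∃ (e : Fin (finrank ℝ V) → CCl Q) (q : Fin (finrank ℝ V) → ℂ),
      (∀ i, e i * e i = algebraMap ℂ (CCl Q) (q i)) ∧
      (∀ i j, i ≠ j → e i * e j = -(e j * e i)) ∧
      (∀ i, q i ≠ 0) ∧
      (∀ x : CCl Q, x ∈ Submodule.span ℂ (Set.range (CT.eS e))) := by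
  letI : Invertible (2 : ℝ) := invertibleOfNonzero two_ne_zero
  obtain ⟨v, hv⟩ := LinearMap.BilinForm.exists_orthogonal_basis
    (QuadraticForm.associated_isSymm ℝ Q)
  have hpolar : ∀ i j, i ≠ j → QuadraticMap.polar Q (v i) (v j) = 0 := by
    intro i j hij
    have h : LinearMap.IsOrtho (QuadraticMap.associatedHom ℝ Q) (v i) (v j) := hv hij
    exact (QuadraticMap.associated_isOrtho.1 h).polar_eq_zero
  have hQv : ∀ i, Q (v i) ≠ 0 := by
    intro i h0
    have hp : ∀ w, QuadraticMap.polar Q (v i) w = 0 := by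
      intro w
      have hw : QuadraticMap.polar Q (v i) w
          = Q.polarBilin (v i) w := (QuadraticMap.polarBilin_apply_apply Q _ _).symm
      rw [hw, ← v.sum_repr w, map_sum]
      refine Finset.sum_eq_zero fun j _ => ?_
      rw [map_smul]
      by_cases hji : j = i
      · subst hji
        rw [QuadraticMap.polarBilin_apply_apply, QuadraticMap.polar_self, h0]
        simp
      · rw [QuadraticMap.polarBilin_apply_apply, hpolar i j (fun h => hji h.symm)]
        simp
    exact v.ne_zero i (hQ (v i) hp)
  set e : Fin (finrank ℝ V) → CCl Q := fun i => CliffordAlgebra.ι (Q.baseChange ℂ) ((1 : ℂ) ⊗ₜ[ℝ] v i)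
    with he
  set q : Fin (finrank ℝ V) → ℂ := fun i => ((Q (v i) : ℝ) : ℂ) with hqdef
  have hbc : ∀ x : V, (Q.baseChange ℂ) ((1 : ℂ) ⊗ₜ[ℝ] x) = ((Q x : ℝ) : ℂ) := by
    intro x
    rw [QuadraticForm.baseChange_tmul, one_mul, Complex.real_smul, mul_one]
  have hsq : ∀ i, e i * e i = algebraMap ℂ (CCl Q) (q i) := by
    intro i
    rw [he, CliffordAlgebra.ι_sq_scalar, hbc]
  have hanti : ∀ i j, i ≠ j → e i * e j = -(e j * e i) := by
    intro i j hij
    have h := CliffordAlgebra.ι_mul_ι_add_swap (Q := Q.baseChange ℂ)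
      ((1 : ℂ) ⊗ₜ[ℝ] v i) ((1 : ℂ) ⊗ₜ[ℝ] v j)
    have hpol : QuadraticMap.polar (⇑(Q.baseChange ℂ)) ((1 : ℂ) ⊗ₜ[ℝ] v i) ((1 : ℂ) ⊗ₜ[ℝ] v j)
        = 0 := by
      rw [QuadraticMap.polar, ← TensorProduct.tmul_add, hbc, hbc, hbc]
      rw [← Complex.ofReal_sub, ← Complex.ofReal_sub]
      rw [show Q (v i + v j) - Q (v i) - Q (v j)
          = QuadraticMap.polar Q (v i) (v j) from rfl]
      rw [hpolar i j hij, Complex.ofReal_zero]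
    rw [hpol, map_zero] at h
    exact eq_neg_of_add_eq_zero_left h
  have hq : ∀ i, q i ≠ 0 := fun i h =>
    hQv i (by simpa [hqdef] using h)
  have hone : (1 : CCl Q) ∈ Submodule.span ℂ (Set.range (CT.eS e)) := by
    rw [← CT.eS_empty e]
    exact Submodule.subset_span ⟨∅, rfl⟩
  have hei : ∀ i, e i ∈ Submodule.span ℂ (Set.range (CT.eS e)) := by
    intro i
    have h := CT.e_mul_eS_mem e q hsq hanti i ∅
    rwa [CT.eS_empty, mul_one] at h
  have hspan : ∀ x : CCl Q, x ∈ Submodule.span ℂ (Set.range (CT.eS e)) := by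
    intro x
    induction x using CliffordAlgebra.induction with
    | algebraMap r =>
      rw [Algebra.algebraMap_eq_smul_one]
      exact Submodule.smul_mem _ _ hone
    | ι m =>
      rw [← (Basis.baseChange ℂ v).sum_repr m, map_sum]
      refine Submodule.sum_mem _ fun j _ => ?_
      rw [map_smul]
      refine Submodule.smul_mem _ _ ?_
      rw [Basis.baseChange_apply ℂ v j]
      exact hei j
    | mul a b ha hb => exact CT.mul_mem_span e q hsq hanti a b ha hb
    | add a b ha hb => exact Submodule.add_mem _ ha hb
  exact ⟨e, q, hsq, hanti, hq, hspan⟩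

end Inst

/-- Let `ρ` be a nonzero c-compatible representation on `(K, (·,·))`, and
`σ = Ad_b ∘ c` an admissible real structure with `b ∈ Γ_ℂ`. For `x ∈ ℂl(V)`, the form
`(ψ,φ)_x := (ψ, ρ(x)φ)` is a σ-compatible Krein product on `K` iff `x^× = x` and `x` is a
nonzero scalar multiple of `b⁻¹`. -/
theorem statement13 [FiniteDimensional ℝ V] (Q : QuadraticForm ℝ V)
    (hdim : Even (Module.finrank ℝ V)) (hQ : QFNondeg Q)
    (c : RealStructure Q) (hc : IsCanonicalC c)
    {K : Type*} [AddCommGroup K] [Module ℂ K] [FiniteDimensional ℂ K]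
    (ρ : CCl Q →ₐ[ℂ] Module.End ℂ K) (hρ : ∃ a : CCl Q, ρ a ≠ 0)
    (h : SesqForm K) (hnd : h.Nondeg) (hcompat : Compat c ρ h)
    (b : (CCl Q)ˣ) (hb : InCliffordGroup b)
    (σ : RealStructure Q) (hadm : Admissible c σ)
    (hσ : ∀ y, σ.toFun y = (b : CCl Q) * c.toFun y * ((b⁻¹ : (CCl Q)ˣ) : CCl Q))
    (x : CCl Q) :
    ((∀ ψ φ : K, h.form φ (ρ x ψ) = starRingEnd ℂ (h.form ψ (ρ x φ)))
      ∧ (∀ ψ : K, (∀ φ : K, h.form ψ (ρ x φ) = 0) → ψ = 0)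
      ∧ (∀ (a : CCl Q) (ψ φ : K),
          h.form (ρ a ψ) (ρ x φ)
            = h.form ψ (ρ x (ρ (σ.toFun (CliffordAlgebra.reverse a)) φ))))
    ↔ (c.toFun (CliffordAlgebra.reverse x) = x
        ∧ ∃ μ : ℂ, μ ≠ 0 ∧ x = μ • ((b⁻¹ : (CCl Q)ˣ) : CCl Q)) := by
  classical
  obtain ⟨e, q, hsq, hanti, hq, hspan⟩ := exists_good_family Q hQ
  -- basic facts about the hermitian form
  have hzero_right : ∀ ψ : K, h.form ψ 0 = 0 := by
    intro ψ
    have := h.smul_right 0 ψ 0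
    simpa using this
  have hsubr : ∀ (ψ x y : K), h.form ψ (x - y) = h.form ψ x - h.form ψ y := by
    intro ψ x y
    have hneg : h.form ψ (-y) = - h.form ψ y := by
      have := h.smul_right (-1) ψ y
      simpa using this
    rw [sub_eq_add_neg, h.add_right, hneg, sub_eq_add_neg]
  have hnd2 : ∀ u : K, (∀ ψ : K, h.form ψ u = 0) → u = 0 := by
    intro u hu
    apply hnd
    intro y
    rw [h.herm, hu y, map_zero]
  -- K is nontrivial
  obtain ⟨a0, ha0⟩ := hρ
  obtain ⟨φ0, hφ0⟩ : ∃ φ : K, ρ a0 φ ≠ 0 := by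
    by_contra hcon
    push_neg at hcon
    exact ha0 (LinearMap.ext fun φ => by simpa using hcon φ)
  have honeK : (1 : Module.End ℂ K) ≠ 0 := by
    intro h1
    apply hφ0
    have := LinearMap.ext_iff.1 h1 (ρ a0 φ0)
    simpa using this
  -- faithfulness and centrality
  have hfaith : Function.Injective ρ :=
    CT.faithful e q hsq hanti hq hdim hspan ρ honeK
  have hcent := CT.central_scalar e q hsq hanti hq hdim hspan
  have hdag_surj : ∀ y : CCl Q, ∃ a : CCl Q,
      c.toFun (CliffordAlgebra.reverse a) = y := by
    intro y
    refine ⟨CliffordAlgebra.reverse (c.toFun y), ?_⟩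
    rw [CliffordAlgebra.reverse_reverse, c.invol]
  have hend_eq : ∀ u w : CCl Q,
      (∀ ψ φ : K, h.form ψ (ρ u φ) = h.form ψ (ρ w φ)) → u = w := by
    intro u w huw
    apply hfaith
    apply LinearMap.ext
    intro φ
    have hsub : ∀ ψ : K, h.form ψ (ρ u φ - ρ w φ) = 0 := by
      intro ψ
      rw [hsubr, huw ψ φ, sub_self]
    exact sub_eq_zero.1 (hnd2 _ hsub)
  constructor
  · rintro ⟨H1, H2, H3⟩
    -- hermitianity forces x^× = x
    have hxdag : c.toFun (CliffordAlgebra.reverse x) = x := by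
      apply hend_eq
      intro ψ φ
      have h1 := hcompat x ψ φ
      have h2 : h.form (ρ x ψ) φ = starRingEnd ℂ (h.form φ (ρ x ψ)) := h.herm φ (ρ x ψ)
      have h3 := H1 ψ φ
      rw [← h1, h2, h3]
      simp
    refine ⟨hxdag, ?_⟩
    -- sigma-compatibility forces x = μ • b⁻¹
    have hkey : ∀ a : CCl Q, c.toFun (CliffordAlgebra.reverse a) * x
        = x * (↑b * c.toFun (CliffordAlgebra.reverse a) * ↑b⁻¹) := by
      intro a
      apply hend_eq
      intro ψ φ
      have h1 : h.form ψ (ρ (c.toFun (CliffordAlgebra.reverse a) * x) φ)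
          = h.form (ρ a ψ) (ρ x φ) := by
        rw [map_mul, Module.End.mul_apply]
        exact (hcompat a ψ (ρ x φ)).symm
      have h2 := H3 a ψ φ
      rw [hσ (CliffordAlgebra.reverse a)] at h2
      rw [h1, h2, ← Module.End.mul_apply, ← map_mul]
    have hz : ∀ y : CCl Q, y * (x * ↑b) = (x * ↑b) * y := by
      intro y
      obtain ⟨a, ha⟩ := hdag_surj y
      have h1 := hkey a
      rw [ha] at h1
      calc y * (x * ↑b) = (y * x) * ↑b := by rw [mul_assoc]
        _ = (x * (↑b * y * ↑b⁻¹)) * ↑b := by rw [h1]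
        _ = x * ↑b * y * (↑b⁻¹ * ↑b) := by
            simp only [mul_assoc]
        _ = (x * ↑b) * y := by rw [Units.inv_mul, mul_one, mul_assoc]
    obtain ⟨μ, hμ⟩ := hcent (x * ↑b) hz
    have hxval : x = μ • (↑b⁻¹ : CCl Q) := by
      have h1 : x * ↑b * ↑b⁻¹ = x := by
        rw [mul_assoc, Units.mul_inv, mul_one]
      rw [← h1, hμ, smul_mul_assoc, one_mul]
    refine ⟨μ, ?_, hxval⟩
    intro hμ0
    rw [hμ0, zero_smul] at hxval
    apply hφ0
    apply H2
    intro φ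
    rw [hxval, map_zero, LinearMap.zero_apply, hzero_right]
  · rintro ⟨hxdag, μ, hμ0, hxval⟩
    have hxb : x * ↑b = μ • (1 : CCl Q) := by
      rw [hxval, smul_mul_assoc, Units.inv_mul]
    refine ⟨?_, ?_, ?_⟩
    · intro ψ φ
      have h1 := hcompat x φ ψ
      rw [hxdag] at h1
      rw [← h1]
      exact h.herm ψ (ρ x φ)
    · intro ψ hψ
      apply hnd
      intro χ
      have h1 : ρ x (μ⁻¹ • (ρ (↑b : CCl Q) χ)) = χ := by
        rw [map_smul, ← Module.End.mul_apply, ← map_mul, hxb]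
        rw [map_smul, map_one]
        simp [smul_smul, inv_mul_cancel₀ hμ0]
      rw [← h1]
      exact hψ _
    · intro a ψ φ
      rw [hcompat a ψ (ρ x φ), hσ (CliffordAlgebra.reverse a)]
      have hbb : (↑b⁻¹ : CCl Q) * (↑b * c.toFun (CliffordAlgebra.reverse a) * ↑b⁻¹)
          = c.toFun (CliffordAlgebra.reverse a) * ↑b⁻¹ := by
        rw [← mul_assoc, ← mul_assoc, Units.inv_mul, one_mul]
      have hcomm : c.toFun (CliffordAlgebra.reverse a) * x
          = x * (↑b * c.toFun (CliffordAlgebra.reverse a) * ↑b⁻¹) := by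
        rw [hxval, mul_smul_comm, smul_mul_assoc, hbb]
      rw [← Module.End.mul_apply, ← map_mul, hcomm, map_mul, Module.End.mul_apply]
end
end

section
/- Let ρ be a nonzero c-compatible representation of ℂl(V) on a finite-dimensional complex vector space K with Krein product (·,·). Let σ = Ad_b ∘ c be an admissible real structure with b in the complex Clifford group and b real, i.e., c(b) = b. Then: (1) if b^× = b, the form (ψ,φ)_b := (ψ, ρ(b)⁻¹φ) is a σ-compatible Krein product on K; (2) if b^× = −b, the form (ψ,φ)_b := (ψ, iρ(b)⁻¹φ) is a σ-compatible Krein product on K. -/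
noncomputable section

open TensorProduct

variable {V : Type*} [AddCommGroup V] [Module ℝ V]

/-- Let `ρ` be a nonzero c-compatible representation on `(K,(·,·))` and
`σ = Ad_b ∘ c` an admissible real structure with `b ∈ Γ_ℂ` real (`c(b) = b`). If `b^× = b`
then `(ψ,φ)_b := (ψ, ρ(b)⁻¹φ)` is a σ-compatible Krein product; if `b^× = −b` then
`(ψ,φ)_b := (ψ, iρ(b)⁻¹φ)` is a σ-compatible Krein product. -/
theorem statement14 [FiniteDimensional ℝ V] (Q : QuadraticForm ℝ V)
    (hdim : Even (Module.finrank ℝ V)) (hQ : QFNondeg Q)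
    (c : RealStructure Q) (hc : IsCanonicalC c)
    {K : Type*} [AddCommGroup K] [Module ℂ K] [FiniteDimensional ℂ K]
    (ρ : CCl Q →ₐ[ℂ] Module.End ℂ K) (hρ : ∃ a : CCl Q, ρ a ≠ 0)
    (h : SesqForm K) (hnd : h.Nondeg) (hcompat : Compat c ρ h)
    (b : (CCl Q)ˣ) (hb : InCliffordGroup b)
    (hbreal : c.toFun (b : CCl Q) = (b : CCl Q))
    (σ : RealStructure Q) (hadm : Admissible c σ)
    (hσ : ∀ y, σ.toFun y = (b : CCl Q) * c.toFun y * ((b⁻¹ : (CCl Q)ˣ) : CCl Q)) :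
    -- case b^× = b
    ((c.toFun (CliffordAlgebra.reverse (b : CCl Q)) = (b : CCl Q)) →
      (∀ ψ φ : K, h.form φ (ρ ((b⁻¹ : (CCl Q)ˣ) : CCl Q) ψ)
          = starRingEnd ℂ (h.form ψ (ρ ((b⁻¹ : (CCl Q)ˣ) : CCl Q) φ)))
      ∧ (∀ ψ : K, (∀ φ : K, h.form ψ (ρ ((b⁻¹ : (CCl Q)ˣ) : CCl Q) φ) = 0) → ψ = 0)
      ∧ (∀ (a : CCl Q) (ψ φ : K),
          h.form (ρ a ψ) (ρ ((b⁻¹ : (CCl Q)ˣ) : CCl Q) φ)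
            = h.form ψ (ρ ((b⁻¹ : (CCl Q)ˣ) : CCl Q)
                (ρ (σ.toFun (CliffordAlgebra.reverse a)) φ))))
    -- case b^× = -b
    ∧ ((c.toFun (CliffordAlgebra.reverse (b : CCl Q)) = -(b : CCl Q)) →
      (∀ ψ φ : K, h.form φ (ρ (Complex.I • ((b⁻¹ : (CCl Q)ˣ) : CCl Q)) ψ)
          = starRingEnd ℂ (h.form ψ (ρ (Complex.I • ((b⁻¹ : (CCl Q)ˣ) : CCl Q)) φ)))
      ∧ (∀ ψ : K, (∀ φ : K,
            h.form ψ (ρ (Complex.I • ((b⁻¹ : (CCl Q)ˣ) : CCl Q)) φ) = 0) → ψ = 0)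
      ∧ (∀ (a : CCl Q) (ψ φ : K),
          h.form (ρ a ψ) (ρ (Complex.I • ((b⁻¹ : (CCl Q)ˣ) : CCl Q)) φ)
            = h.form ψ (ρ (Complex.I • ((b⁻¹ : (CCl Q)ˣ) : CCl Q))
                (ρ (σ.toFun (CliffordAlgebra.reverse a)) φ)))) := by
  set br : CCl Q := ((b⁻¹ : (CCl Q)ˣ) : CCl Q) with hbr
  have hbi : (b : CCl Q) * br = 1 := b.mul_inv
  have hib : br * (b : CCl Q) = 1 := b.inv_mul
  have hrev : CliffordAlgebra.reverse br * CliffordAlgebra.reverse (b : CCl Q) = 1 := by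
    rw [← CliffordAlgebra.reverse.map_mul, hbi, CliffordAlgebra.reverse.map_one]
  have crevbr_b : c.toFun (CliffordAlgebra.reverse br)
      * c.toFun (CliffordAlgebra.reverse (b : CCl Q)) = 1 := by
    rw [← c.map_mul', hrev, c.map_one']
  -- key algebra identity for σ-compatibility
  have hswap : ∀ a : CCl Q,
      c.toFun (CliffordAlgebra.reverse a) * br
        = br * σ.toFun (CliffordAlgebra.reverse a) := by
    intro a
    rw [hσ, ← mul_assoc, ← mul_assoc, hib, one_mul]
  have hρinv : ∀ y : K, ρ br (ρ (b : CCl Q) y) = y := by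
    intro y
    rw [← Module.End.mul_apply, ← map_mul, hib, map_one, Module.End.one_apply]
  constructor
  · -- case b^× = b
    intro hbsym
    have crb : c.toFun (CliffordAlgebra.reverse br) = br := by
      have h1 : c.toFun (CliffordAlgebra.reverse br) * (b : CCl Q) = 1 := by
        rw [← hbsym]; exact crevbr_b
      calc c.toFun (CliffordAlgebra.reverse br)
          = c.toFun (CliffordAlgebra.reverse br) * ((b : CCl Q) * br) := by
            rw [hbi, mul_one]
        _ = (c.toFun (CliffordAlgebra.reverse br) * (b : CCl Q)) * br := by
            rw [mul_assoc]
        _ = br := by rw [h1, one_mul]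
    refine ⟨?_, ?_, ?_⟩
    · intro ψ φ
      rw [h.herm (ρ br ψ) φ, hcompat br ψ φ, crb]
    · intro ψ hψ
      apply hnd
      intro y
      have := hψ (ρ (b : CCl Q) y)
      rwa [hρinv] at this
    · intro a ψ φ
      rw [hcompat a ψ (ρ br φ)]
      congr 1
      rw [← Module.End.mul_apply, ← Module.End.mul_apply, ← map_mul, ← map_mul, hswap]
  · -- case b^× = -b
    intro hbsym
    have crb : c.toFun (CliffordAlgebra.reverse br) = -br := by
      have h1 : c.toFun (CliffordAlgebra.reverse br) * (b : CCl Q) = -1 := by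
        have h2 : c.toFun (CliffordAlgebra.reverse br) * (-(b : CCl Q)) = 1 := by
          rw [← hbsym]; exact crevbr_b
        rw [mul_neg] at h2
        linear_combination (norm := abel) -h2
      calc c.toFun (CliffordAlgebra.reverse br)
          = c.toFun (CliffordAlgebra.reverse br) * ((b : CCl Q) * br) := by
            rw [hbi, mul_one]
        _ = (c.toFun (CliffordAlgebra.reverse br) * (b : CCl Q)) * br := by
            rw [mul_assoc]
        _ = -br := by rw [h1, neg_one_mul]
    have crbI : c.toFun (CliffordAlgebra.reverse (Complex.I • br)) = Complex.I • br := by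
      rw [map_smul, c.map_smul', crb, Complex.conj_I, neg_smul, smul_neg, neg_neg]
    refine ⟨?_, ?_, ?_⟩
    · intro ψ φ
      rw [h.herm (ρ (Complex.I • br) ψ) φ, hcompat (Complex.I • br) ψ φ, crbI]
    · intro ψ hψ
      apply hnd
      intro y
      have := hψ (ρ (b : CCl Q) ((-Complex.I) • y))
      rw [map_smul, LinearMap.smul_apply, hρinv, h.smul_right, h.smul_right,
        ← mul_assoc] at this
      simpa [Complex.I_mul_I] using this
    · intro a ψ φ
      rw [hcompat a ψ (ρ (Complex.I • br) φ)]
      congr 1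
      rw [← Module.End.mul_apply, ← Module.End.mul_apply, ← map_mul, ← map_mul]
      congr 2
      rw [mul_smul_comm, smul_mul_assoc, hswap]
end
end
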